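/- arXiv:1310.7626 — 6 statements merged into one kernel-verified Lean document; each statement's English description precedes it below -/
import Mathlib

section
/- For quaternions x and s with x not in the sphere [s] (equivalently, x² - 2Re(s)x + |s|² is invertible and s² - 2Re(x)s + |x|² is invertible), the two forms of the slice-hyperholomorphic Cauchy kernel coincide: -(x - s̄)(x² - 2Re(s)x + |s|²)⁻¹ = (s² - 2Re(x)s + |x|²)⁻¹(s - x̄). -/
/-!
Every quaternion satisfies its characteristic equation `x² = 2Re(x)x - |x|²`, so
`x² - 2Re(s)x + |s|² = 2(Re x - Re s)x + (|s|² - |x|²)` is affine in `x`. If `Re x ≠ Re s`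
its vanishing would force `x` to be real and a root of `t² - 2Re(s)t + |s|²`, whose only
possible real root is `Re s`; if `Re x = Re s` it vanishes iff `|x| = |s|`. So both
quadratic factors are invertible off `[s]`, and the two kernels agree because of the cross
identity `(s² - 2Re(x)s + |x|²)(s̄ - x) = (s - x̄)(x² - 2Re(s)x + |s|²)`, a polynomial
identity in the components.
-/

open scoped Quaternion

namespace Quaternion

theorem sq_eq_two_re_smul_sub_normSq {R : Type*} [CommRing R] (x : ℍ[R]) :
    x ^ 2 = (2 * x.re) • x - ((normSq x : R) : ℍ[R]) := by
  rw [← star_mul_self, ← coe_mul_eq_smul, ← self_add_star', add_mul, sq]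
  abel

theorem sq_re_le_sq_norm (x : ℍ[ℝ]) : x.re ^ 2 ≤ ‖x‖ ^ 2 := by
  rw [sq ‖x‖, ← normSq_eq_norm_mul_self, normSq_def']
  nlinarith [sq_nonneg x.imI, sq_nonneg x.imJ, sq_nonneg x.imK]

theorem sq_sub_two_re_smul_add_sq_norm (x s : ℍ[ℝ]) :
    x ^ 2 - (2 * s.re) • x + ((‖s‖ ^ 2 : ℝ) : ℍ[ℝ]) =
      (2 * (x.re - s.re)) • x + ((‖s‖ ^ 2 - ‖x‖ ^ 2 : ℝ) : ℍ[ℝ]) := by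
  rw [sq_eq_two_re_smul_sub_normSq, normSq_eq_norm_mul_self, ← sq, mul_sub, sub_smul,
    coe_sub]
  abel

end Quaternion

open Quaternion

theorem sq_sub_two_re_smul_add_sq_norm_ne_zero {x s : ℍ[ℝ]}
    (h : ¬(x.re = s.re ∧ ‖x‖ = ‖s‖)) :
    x ^ 2 - (2 * s.re) • x + ((‖s‖ ^ 2 : ℝ) : ℍ[ℝ]) ≠ 0 := by
  rw [sq_sub_two_re_smul_add_sq_norm]
  intro hzero
  obtain ⟨hre, himI, himJ, himK⟩ := Quaternion.ext_iff.mp hzero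
  simp only [re_add, re_smul, re_coe, imI_add, imI_smul, imI_coe, imJ_add, imJ_smul, imJ_coe,
    imK_add, imK_smul, imK_coe, re_zero, imI_zero, imJ_zero, imK_zero, smul_eq_mul,
    add_zero] at hre himI himJ himK
  by_cases hres : x.re = s.re
  · rw [hres, sub_self, mul_zero, zero_mul, zero_add] at hre
    exact h ⟨hres, by nlinarith [norm_nonneg x, norm_nonneg s]⟩
  · have hd : 2 * (x.re - s.re) ≠ 0 := mul_ne_zero two_ne_zero (sub_ne_zero.mpr hres)
    have hnorm : ‖x‖ ^ 2 = x.re ^ 2 := by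
      rw [sq ‖x‖, ← normSq_eq_norm_mul_self, normSq_def',
        (mul_eq_zero.mp himI).resolve_left hd, (mul_eq_zero.mp himJ).resolve_left hd,
        (mul_eq_zero.mp himK).resolve_left hd]
      ring
    exact hres (by nlinarith [sq_re_le_sq_norm s])

theorem cauchy_kernel_cross_mul (x s : ℍ[ℝ]) :
    (s ^ 2 - (2 * x.re) • s + ((‖x‖ ^ 2 : ℝ) : ℍ[ℝ])) * (-(x - star s)) =
      (s - star x) * (x ^ 2 - (2 * s.re) • x + ((‖s‖ ^ 2 : ℝ) : ℍ[ℝ])) := by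
  rw [sq ‖x‖, sq ‖s‖, ← normSq_eq_norm_mul_self, ← normSq_eq_norm_mul_self, normSq_def',
    normSq_def']
  ext <;> simp [sq, re_mul, imI_mul, imJ_mul, imK_mul] <;> ring

/-- For quaternions `x`, `s` with `x ∉ [s]`, the two forms of the
slice-hyperholomorphic Cauchy kernel coincide:
`-(x - s̄)(x² - 2Re(s)x + |s|²)⁻¹ = (s² - 2Re(x)s + |x|²)⁻¹(s - x̄)`. -/
theorem cauchy_kernel_form_I_eq_form_II (x s : ℍ[ℝ])
    (h : ¬(x.re = s.re ∧ ‖x‖ = ‖s‖)) :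
    -(x - star s) * (x ^ 2 - (2 * s.re) • x + ((‖s‖ ^ 2 : ℝ) : ℍ[ℝ]))⁻¹ =
      (s ^ 2 - (2 * x.re) • s + ((‖x‖ ^ 2 : ℝ) : ℍ[ℝ]))⁻¹ * (s - star x) := by
  have hx := sq_sub_two_re_smul_add_sq_norm_ne_zero h
  have hs := sq_sub_two_re_smul_add_sq_norm_ne_zero (x := s) (s := x) fun hc =>
    h ⟨hc.1.symm, hc.2.symm⟩
  rw [mul_inv_eq_iff_eq_mul₀ hx, mul_assoc, eq_inv_mul_iff_mul_eq₀ hs]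
  exact cauchy_kernel_cross_mul x s
end

section
/- For quaternions p, s with |p| < |s| and s ≠ 0, and for any quaternion A, the series Σ_{m≥0} pᵐ A s^{-1-m} converges and equals -(p² - 2Re(s)p + |s|²)⁻¹(pA - A s̄). -/
open scoped Quaternion

/-!
The sum `T` solves the Sylvester equation `T s = A + p T`. Since `s` is a root of its
characteristic polynomial `x² - 2 Re(s) x + |s|²`, applying that polynomial to the equation gives
`(p² - 2 Re(s) p + |s|²) T = A s̄ - p A`. The left factor is invertible: for `q` commuting with `p` and
having the real part and norm of `s` (take `q ∈ ℝ + ℝ Im(p)`), it factors as `(p - q)(p - q̄)`,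
and `|q| = |q̄| = |s| > |p|`.
-/

section Sylvester

variable {𝕜 R : Type*} [CommRing 𝕜] [Ring R] [Algebra 𝕜 R]

theorem mul_eq_of_mul_eq_add_mul_of_sq_sub_smul_add_eq_zero {s p A T : R} {t n : 𝕜}
    (hs : s ^ 2 - t • s + algebraMap 𝕜 R n = 0) (hT : T * s = A + p * T) :
    (p ^ 2 - t • p + algebraMap 𝕜 R n) * T = A * (algebraMap 𝕜 R t - s) - p * A := by
  have hTs2 : T * s ^ 2 = A * s + p * A + p ^ 2 * T := by
    rw [sq, ← mul_assoc, hT, add_mul, mul_assoc, hT]; noncomm_ring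
  have hs_T : T * s ^ 2 - t • (T * s) + algebraMap 𝕜 R n * T = 0 := by
    rw [Algebra.commutes, ← mul_smul_comm, ← mul_sub, ← mul_add, hs, mul_zero]
  rw [hTs2, hT] at hs_T
  rw [mul_sub, ← Algebra.commutes, ← Algebra.smul_def, ← sub_eq_zero, ← hs_T]
  simp only [add_mul, sub_mul, smul_mul_assoc, smul_add]
  abel

end Sylvester

section Series

variable {R : Type*}

theorem mul_eq_add_mul_of_hasSum_pow_mul_mul_inv_pow [DivisionRing R] [TopologicalSpace R]
    [IsTopologicalRing R] [T2Space R] {p s A T : R} (hs : s ≠ 0)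
    (hT : HasSum (fun m : ℕ => p ^ m * A * s⁻¹ ^ (m + 1)) T) : T * s = A + p * T := by
  have hTs : HasSum (fun m : ℕ => p ^ m * A * s⁻¹ ^ m) (T * s) := by
    simpa [mul_assoc, pow_succ, inv_mul_cancel₀ hs] using hT.mul_right s
  have hpT : HasSum (fun m : ℕ => p ^ (m + 1) * A * s⁻¹ ^ (m + 1)) (p * T) := by
    simpa [mul_assoc, pow_succ'] using hT.mul_left p
  have hshift := (hasSum_nat_add_iff' 1).mpr hTs
  rw [Finset.sum_range_one, pow_zero, pow_zero, one_mul, mul_one] at hshift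
  rw [hpT.unique hshift]; abel

theorem summable_pow_mul_mul_inv_pow [NormedDivisionRing R] [CompleteSpace R] {p s : R}
    (A : R) (hps : ‖p‖ < ‖s‖) : Summable (fun m : ℕ => p ^ m * A * s⁻¹ ^ (m + 1)) := by
  have hs : 0 < ‖s‖ := (norm_nonneg p).trans_lt hps
  have hratio : ‖p‖ / ‖s‖ < 1 := (div_lt_one hs).mpr hps
  refine Summable.of_norm
    (((summable_geometric_of_lt_one (by positivity) hratio).mul_left (‖A‖ / ‖s‖)).congr fun m => ?_)
  rw [norm_mul, norm_mul, norm_pow, norm_pow, norm_inv]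
  ring

end Series

namespace Quaternion

theorem sq_sub_two_re_smul_add_norm_sq_eq_mul {p q : ℍ[ℝ]} (h : Commute p q) :
    p ^ 2 - (2 * q.re) • p + ((‖q‖ ^ 2 : ℝ) : ℍ[ℝ]) = (p - q) * (p - star q) := by
  have hre : ((2 * q.re : ℝ) : ℍ[ℝ]) = q + star q := q.self_add_star'.symm
  have hnorm : ((‖q‖ ^ 2 : ℝ) : ℍ[ℝ]) = q * star q := by
    rw [self_mul_star, normSq_eq_norm_mul_self, sq]
  rw [← mul_coe_eq_smul, hre, hnorm, sub_mul, mul_sub, mul_sub, ← h.eq]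
  noncomm_ring

theorem norm_sq_eq_re_sq_add_norm_im_sq (a : ℍ[ℝ]) : ‖a‖ ^ 2 = a.re ^ 2 + ‖a.im‖ ^ 2 := by
  simp only [sq, ← normSq_eq_norm_mul_self, normSq_def', re_im, imI_im, imJ_im, imK_im]
  ring

theorem exists_commute_re_eq_norm_eq (p s : ℍ[ℝ]) :
    ∃ q : ℍ[ℝ], Commute p q ∧ q.re = s.re ∧ ‖q‖ = ‖s‖ := by
  by_cases hp : p.im = 0
  · refine ⟨s, ?_, rfl, rfl⟩
    rw [← re_add_im p, hp, add_zero]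
    exact coe_commute _ _
  set q : ℍ[ℝ] := (s.re : ℍ[ℝ]) + (‖s.im‖ / ‖p.im‖) • p.im
  have hpim : Commute p p.im := by
    rw [← sub_re_self]; exact (Commute.refl p).sub_right (coe_commute _ _).symm
  have hqim : ‖q.im‖ = ‖s.im‖ := by
    have : ‖p.im‖ ≠ 0 := norm_ne_zero_iff.mpr hp
    simp [q, norm_smul, this]
  refine ⟨q, (coe_commute _ _).symm.add_right (hpim.smul_right _), by simp [q], ?_⟩
  rw [← pow_left_inj₀ (norm_nonneg _) (norm_nonneg _) two_ne_zero,
    norm_sq_eq_re_sq_add_norm_im_sq, norm_sq_eq_re_sq_add_norm_im_sq s, hqim]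
  simp [q]

theorem sq_sub_two_re_smul_add_norm_sq_ne_zero {p s : ℍ[ℝ]} (hps : ‖p‖ < ‖s‖) :
    p ^ 2 - (2 * s.re) • p + ((‖s‖ ^ 2 : ℝ) : ℍ[ℝ]) ≠ 0 := by
  obtain ⟨q, hpq, hre, hnorm⟩ := exists_commute_re_eq_norm_eq p s
  have sub_ne_zero_of_norm_eq : ∀ r : ℍ[ℝ], ‖r‖ = ‖s‖ → p - r ≠ 0 := by
    rintro r hr h
    rw [sub_eq_zero.mp h] at hps
    exact hps.ne hr
  rw [← hre, ← hnorm, sq_sub_two_re_smul_add_norm_sq_eq_mul hpq]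
  exact mul_ne_zero (sub_ne_zero_of_norm_eq q hnorm)
    (sub_ne_zero_of_norm_eq _ ((norm_star q).trans hnorm))

end Quaternion

open Quaternion

/-- For quaternions `p`, `s` with `|p| < |s|` and `s ≠ 0` and any quaternion `A`,
the series `Σ_{m≥0} pᵐ A s^{-1-m}` converges to
`-(p² - 2Re(s)p + |s|²)⁻¹ (pA - A s̄)`. -/
theorem left_kernel_series (p s A : ℍ[ℝ]) (hps : ‖p‖ < ‖s‖) (hs : s ≠ 0) :
    HasSum (fun m : ℕ => p ^ m * A * s⁻¹ ^ (m + 1))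
      (-((p ^ 2 - (2 * s.re) • p + ((‖s‖ ^ 2 : ℝ) : ℍ[ℝ]))⁻¹ * (p * A - A * star s))) := by
  have hT := (summable_pow_mul_mul_inv_pow A hps).hasSum
  have hs_root : s ^ 2 - (2 * s.re) • s + algebraMap ℝ ℍ[ℝ] (‖s‖ ^ 2) = 0 := by
    rw [algebraMap_def, sq_sub_two_re_smul_add_norm_sq_eq_mul (Commute.refl s), sub_self, zero_mul]
  have hQT := mul_eq_of_mul_eq_add_mul_of_sq_sub_smul_add_eq_zero hs_root
    (mul_eq_add_mul_of_hasSum_pow_mul_mul_inv_pow hs hT)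
  rw [algebraMap_def, ← self_add_star', add_sub_cancel_left] at hQT
  convert hT
  rw [← mul_neg, neg_sub, ← hQT, inv_mul_cancel_left₀ (sq_sub_two_re_smul_add_norm_sq_ne_zero hps)]
end

section
/- Right S-resolvent equation: under the same hypotheses, for S_R^{-1}(s,T) := -(T - s̄I)·Q_s(T)⁻¹ with Q_s(T) = T² - 2Re(s)T + |s|²I invertible, one has s·S_R^{-1}(s,T) - S_R^{-1}(s,T)·T = I, where s·S_R^{-1}(s,T) denotes S_R^{-1}(s,T) followed by left multiplication by s in the appropriate module sense. -/
/-!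
Write `a = s·I` and `b = s̄·I`. Left multiplication by `s` does not commute with `T`, but
`a + b = 2 Re(s)·I` and `a b = |s|²·I` are real multiples of the identity, so `Q_s(T)` commutes
with `T`, hence so does its inverse, and the equation becomes the ring identity
`(T - b) T - a (T - b) = T² - (a + b) T + a b = Q_s(T)`.
-/

open scoped Quaternion
open MulOpposite

theorem Commute.ringInverse_left {M₀ : Type*} [MonoidWithZero M₀] {a b : M₀}
    (h : Commute a b) : Commute (Ring.inverse a) b := by
  by_cases ha : IsUnit a
  · obtain ⟨u, rfl⟩ := ha
    rw [Ring.inverse_unit]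
    exact h.units_inv_left
  · rw [Ring.inverse_non_unit a ha]
    exact Commute.zero_left b

theorem mul_neg_sub_mul_inverse_sub_mul_eq_one {R : Type*} [Ring R] {T a b : R}
    (hsum : Commute (a + b) T) (hprod : Commute (a * b) T)
    (hQ : IsUnit (T ^ 2 - (a + b) * T + a * b)) :
    a * (-((T - b) * Ring.inverse (T ^ 2 - (a + b) * T + a * b)))
      - -((T - b) * Ring.inverse (T ^ 2 - (a + b) * T + a * b)) * T = 1 := by
  set Q := T ^ 2 - (a + b) * T + a * b
  have hQT : Commute Q T :=
    (((Commute.refl T).pow_left 2).sub_left (hsum.mul_left (Commute.refl T))).add_left hprod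
  calc a * -((T - b) * Ring.inverse Q) - -((T - b) * Ring.inverse Q) * T
      = ((T - b) * T - a * (T - b)) * Ring.inverse Q := by
        rw [neg_mul, mul_assoc (T - b) _ T, hQT.ringInverse_left.eq]
        noncomm_ring
    _ = Q * Ring.inverse Q := by
        congr 1
        simp only [Q, sq]
        noncomm_ring
    _ = 1 := Ring.mul_inverse_cancel Q hQ

section QuaternionicOperators

variable {V : Type*} [NormedAddCommGroup V] [NormedSpace ℝ V] [Module ℍ[ℝ] V]
  [SMulCommClass ℝ ℍ[ℝ] V] [ContinuousConstSMul ℍ[ℝ] V]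

theorem ContinuousLinearMap.quaternion_smul_one_mul (c : ℍ[ℝ]) (X : V →L[ℝ] V) :
    (c • (1 : V →L[ℝ] V)) * X = c • X :=
  rfl

variable [IsScalarTower ℝ ℍ[ℝ] V]

theorem ContinuousLinearMap.coe_real_smul (r : ℝ) (X : V →L[ℝ] V) :
    (r : ℍ[ℝ]) • X = r • X := by
  rw [← Quaternion.algebraMap_def, algebraMap_smul]

theorem ContinuousLinearMap.quaternion_smul_one_add_star (s : ℍ[ℝ]) :
    s • (1 : V →L[ℝ] V) + star s • (1 : V →L[ℝ] V) = (2 * s.re) • (1 : V →L[ℝ] V) := by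
  rw [← add_smul, Quaternion.self_add_star', coe_real_smul]

theorem ContinuousLinearMap.quaternion_smul_one_mul_star (s : ℍ[ℝ]) :
    (s • (1 : V →L[ℝ] V)) * (star s • (1 : V →L[ℝ] V)) = (‖s‖ ^ 2 : ℝ) • (1 : V →L[ℝ] V) := by
  rw [quaternion_smul_one_mul, smul_smul, Quaternion.self_mul_star,
    Quaternion.normSq_eq_norm_mul_self, ← sq, coe_real_smul]

end QuaternionicOperators

theorem right_S_resolvent_equation_general
    {V : Type*} [NormedAddCommGroup V] [NormedSpace ℝ V]
    [Module ℍ[ℝ] V]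
    [IsScalarTower ℝ ℍ[ℝ] V]
    [SMulCommClass ℝ ℍ[ℝ] V]
    [ContinuousConstSMul ℍ[ℝ] V]
    (T : V →L[ℝ] V)
    (s : ℍ[ℝ]) (hQ : IsUnit (T ^ 2 - (2 * s.re) • T + (‖s‖ ^ 2 : ℝ) • (1 : V →L[ℝ] V))) :
    s • (-((T - star s • (1 : V →L[ℝ] V)) * Ring.inverse (T ^ 2 - (2 * s.re) • T + (‖s‖ ^ 2 : ℝ) • (1 : V →L[ℝ] V)))) - (-((T - star s • (1 : V →L[ℝ] V)) * Ring.inverse (T ^ 2 - (2 * s.re) • T + (‖s‖ ^ 2 : ℝ) • (1 : V →L[ℝ] V)))) * T = 1 := by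
  open ContinuousLinearMap in
  have hQ_eq : T ^ 2 - (s • 1 + star s • 1) * T + (s • 1) * (star s • 1)
      = T ^ 2 - (2 * s.re) • T + (‖s‖ ^ 2 : ℝ) • (1 : V →L[ℝ] V) := by
    rw [quaternion_smul_one_add_star, quaternion_smul_one_mul_star, smul_one_mul]
  have hsum : Commute (s • 1 + star s • 1 : V →L[ℝ] V) T := by
    rw [quaternion_smul_one_add_star]
    exact (Commute.one_left T).smul_left _
  have hprod : Commute ((s • 1) * (star s • 1) : V →L[ℝ] V) T := by
    rw [quaternion_smul_one_mul_star]
    exact (Commute.one_left T).smul_left _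
  have key := mul_neg_sub_mul_inverse_sub_mul_eq_one hsum hprod (hQ_eq ▸ hQ)
  rwa [hQ_eq, quaternion_smul_one_mul] at key

/-- Right S-resolvent equation: for a bounded right-linear operator `T` on a
two-sided quaternionic Banach space and `s ∈ ℍ` with
`Q_s(T) = T² - 2Re(s)T + |s|²I` invertible, the operator
`S_R⁻¹(s,T) = -(T - s̄I)·Q_s(T)⁻¹` satisfies `s·S_R⁻¹(s,T) - S_R⁻¹(s,T)·T = I`. -/
theorem right_S_resolvent_equation
    {V : Type*} [NormedAddCommGroup V] [NormedSpace ℝ V]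
    [Module ℍ[ℝ] V] [Module ℍ[ℝ]ᵐᵒᵖ V]
    [IsScalarTower ℝ ℍ[ℝ] V] [IsScalarTower ℝ ℍ[ℝ]ᵐᵒᵖ V]
    [SMulCommClass ℝ ℍ[ℝ] V] [SMulCommClass ℝ ℍ[ℝ]ᵐᵒᵖ V]
    [SMulCommClass ℍ[ℝ] ℍ[ℝ]ᵐᵒᵖ V]
    [ContinuousConstSMul ℍ[ℝ] V] [ContinuousConstSMul ℍ[ℝ]ᵐᵒᵖ V]
    (T : V →L[ℝ] V) (hT : ∀ (a : ℍ[ℝ]) (v : V), T (op a • v) = op a • T v)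
    (s : ℍ[ℝ]) (hQ : IsUnit (T ^ 2 - (2 * s.re) • T + (‖s‖ ^ 2 : ℝ) • (1 : V →L[ℝ] V))) :
    s • (-((T - star s • (1 : V →L[ℝ] V)) * Ring.inverse (T ^ 2 - (2 * s.re) • T + (‖s‖ ^ 2 : ℝ) • (1 : V →L[ℝ] V)))) - (-((T - star s • (1 : V →L[ℝ] V)) * Ring.inverse (T ^ 2 - (2 * s.re) • T + (‖s‖ ^ 2 : ℝ) • (1 : V →L[ℝ] V)))) * T = 1 :=
  right_S_resolvent_equation_general T s hQ
end

section
/- The S-spectrum of a bounded quaternionic linear operator on a nonzero quaternionic Banach space is a compact subset of ℍ (closed and bounded). -/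
open scoped Quaternion
open MulOpposite
open Metric

/-!
The map `s ↦ T² - 2 Re(s) T + |s|² I` is continuous and the units of a Banach algebra form an open
set, so the S-spectrum is closed. For `|s| > 3‖T‖` the operator equals `|s|² (I - X)` with
`‖X‖ ≤ (2|s|‖T‖ + ‖T‖²) / |s|² < 1`, which is invertible by the Neumann series, so the S-spectrum is
also bounded.
-/

theorem Quaternion.abs_re_le_norm (s : ℍ[ℝ]) : |s.re| ≤ ‖s‖ := by
  refine abs_le_of_sq_le_sq ?_ (norm_nonneg s)
  have := Quaternion.normSq_eq_norm_mul_self s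
  rw [Quaternion.normSq_def'] at this
  nlinarith [sq_nonneg s.imI, sq_nonneg s.imJ, sq_nonneg s.imK]

section BanachAlgebra

variable {A : Type*} [NormedRing A] [NormedAlgebra ℝ A] [CompleteSpace A]

theorem isUnit_sq_sub_smul_add_smul_one (a : A) {b c : ℝ} (h : ‖a‖ ^ 2 + |b| * ‖a‖ < c) :
    IsUnit (a ^ 2 - b • a + c • (1 : A)) := by
  have hc : 0 < c := by nlinarith [norm_nonneg a, abs_nonneg b]
  set x : A := c⁻¹ • (b • a - a ^ 2)
  have hx : ‖x‖ < 1 := by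
    have hnum : ‖b • a - a ^ 2‖ ≤ |b| * ‖a‖ + ‖a‖ ^ 2 :=
      calc ‖b • a - a ^ 2‖ ≤ ‖b • a‖ + ‖a ^ 2‖ := norm_sub_le _ _
        _ ≤ |b| * ‖a‖ + ‖a‖ ^ 2 := by
          rw [norm_smul, Real.norm_eq_abs]
          gcongr
          exact norm_pow_le' a two_pos
    calc ‖x‖ = c⁻¹ * ‖b • a - a ^ 2‖ := by
          rw [norm_smul, Real.norm_eq_abs, abs_inv, abs_of_pos hc]
      _ ≤ c⁻¹ * (|b| * ‖a‖ + ‖a‖ ^ 2) := by gcongr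
      _ < c⁻¹ * c := by gcongr; linarith
      _ = 1 := inv_mul_cancel₀ hc.ne'
  have hfactor : a ^ 2 - b • a + c • (1 : A) = algebraMap ℝ A c * (1 - x) := by
    rw [← Algebra.smul_def, smul_sub, smul_inv_smul₀ hc.ne']
    abel
  rw [hfactor]
  exact (hc.ne'.isUnit.map (algebraMap ℝ A)).mul (Units.oneSub x hx).isUnit

variable (A) in
/-- For `A = V →L[ℝ] V` with `V` a quaternionic Banach space, this is the S-spectrum of an
operator. -/
def sSpectrum (a : A) : Set ℍ[ℝ] :=
  {s | ¬IsUnit (a ^ 2 - (2 * s.re) • a + (‖s‖ ^ 2 : ℝ) • (1 : A))}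

theorem isClosed_sSpectrum (a : A) : IsClosed (sSpectrum A a) := by
  have hcont : Continuous fun s : ℍ[ℝ] => a ^ 2 - (2 * s.re) • a + (‖s‖ ^ 2 : ℝ) • (1 : A) := by
    have := Quaternion.continuous_re
    fun_prop
  exact (Units.isOpen.preimage hcont).isClosed_compl

theorem sSpectrum_subset_closedBall (a : A) : sSpectrum A a ⊆ closedBall 0 (3 * ‖a‖) := by
  intro s hs
  rw [mem_closedBall, dist_zero_right]
  by_contra! hlarge
  refine hs (isUnit_sq_sub_smul_add_smul_one a ?_)
  have hre : |2 * s.re| ≤ 2 * ‖s‖ := by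
    rw [abs_mul, abs_two]
    exact mul_le_mul_of_nonneg_left (Quaternion.abs_re_le_norm s) zero_le_two
  nlinarith [norm_nonneg a, mul_le_mul_of_nonneg_right hre (norm_nonneg a)]

theorem isCompact_sSpectrum (a : A) : IsCompact (sSpectrum A a) :=
  (isCompact_closedBall 0 _).of_isClosed_subset (isClosed_sSpectrum a)
    (sSpectrum_subset_closedBall a)

end BanachAlgebra

theorem S_spectrum_isCompact_general
    {V : Type*} [NormedAddCommGroup V] [NormedSpace ℝ V] [CompleteSpace V]
    (T : V →L[ℝ] V) :
    IsCompact {s : ℍ[ℝ] |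
      ¬IsUnit (T ^ 2 - (2 * s.re) • T + (‖s‖ ^ 2 : ℝ) • (1 : V →L[ℝ] V))} :=
  isCompact_sSpectrum T

/-- The S-spectrum
`σ_S(T) = {s : ℍ | T² - 2Re(s)T + |s|²I is not invertible}` of a bounded
quaternionic linear operator on a nonzero quaternionic Banach space is compact. -/
theorem S_spectrum_isCompact
    {V : Type*} [NormedAddCommGroup V] [NormedSpace ℝ V] [CompleteSpace V]
    [Module ℍ[ℝ] V] [Module ℍ[ℝ]ᵐᵒᵖ V]
    [IsScalarTower ℝ ℍ[ℝ] V] [IsScalarTower ℝ ℍ[ℝ]ᵐᵒᵖ V]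
    [SMulCommClass ℝ ℍ[ℝ] V] [SMulCommClass ℝ ℍ[ℝ]ᵐᵒᵖ V]
    [SMulCommClass ℍ[ℝ] ℍ[ℝ]ᵐᵒᵖ V]
    [ContinuousConstSMul ℍ[ℝ] V] [ContinuousConstSMul ℍ[ℝ]ᵐᵒᵖ V] [Nontrivial V]
    (T : V →L[ℝ] V) (hT : ∀ (a : ℍ[ℝ]) (v : V), T (op a • v) = op a • T v) :
    IsCompact {s : ℍ[ℝ] |
      ¬IsUnit (T ^ 2 - (2 * s.re) • T + (‖s‖ ^ 2 : ℝ) • (1 : V →L[ℝ] V))} :=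
  S_spectrum_isCompact_general T
end

section
/- Algebraic derivation step: let T be a bounded quaternionic operator and s, p with Q_s(T), Q_p(T) invertible. Using only the left S-resolvent equation S_L^{-1}(p,T)p = T S_L^{-1}(p,T) + I and the right S-resolvent equation S_R^{-1}(s,T)T = s S_R^{-1}(s,T) - I, one has: S_R^{-1}(s,T)S_L^{-1}(p,T)(p² - 2Re(s)p + |s|²) = (s² - 2Re(s)s + |s|²)S_R^{-1}(s,T)S_L^{-1}(p,T) + [S_R^{-1}(s,T) - S_L^{-1}(p,T)]p - s̄[S_R^{-1}(s,T) - S_L^{-1}(p,T)]. -/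
open scoped Quaternion
open MulOpposite

/-!
The right resolvent equation gives `S_R Q_s(T) = s̄ - T`, so `S_R = (s̄ - T) Q_s(T)⁻¹` commutes with
right multiplication by `p`, as `T` and left multiplications do. Then the left resolvent equation
yields `S_R S_L p = s S_R S_L + S_R - S_L`, and applying this twice expands the quadratic in `p`.
-/

instance ContinuousLinearMap.isScalarTower_mul {R M S : Type*} [Semiring R] [TopologicalSpace M]
    [AddCommMonoid M] [Module R M] [Monoid S] [DistribMulAction S M] [SMulCommClass R S M]
    [ContinuousConstSMul S M] : IsScalarTower S (M →L[R] M) (M →L[R] M) :=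
  ⟨fun c f g => ContinuousLinearMap.smul_comp c f g⟩

theorem Quaternion.sq_sub_two_re_smul_add_norm_sq (s : ℍ[ℝ]) :
    s ^ 2 - (2 * s.re) • s + ((‖s‖ ^ 2 : ℝ) : ℍ[ℝ]) = 0 := by
  have h : s * star s = ((‖s‖ ^ 2 : ℝ) : ℍ[ℝ]) := by
    rw [Quaternion.self_mul_star, Quaternion.normSq_eq_norm_mul_self, sq]
  rw [← h, Quaternion.star_eq_two_re_sub, mul_sub, ← Quaternion.coe_mul_eq_smul,
    ← Quaternion.coe_commutes, sq]
  abel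

theorem Commute.of_mul_eq_of_isUnit {A : Type*} [Monoid A] {r S Q B : A} (hQ : IsUnit Q)
    (hrQ : Commute r Q) (hrB : Commute r B) (h : S * Q = B) : Commute r S := by
  obtain ⟨u, rfl⟩ := hQ
  rw [← Units.mul_inv_cancel_right S u, h]
  exact hrB.mul_right hrQ.units_inv_right

section

variable {R K A : Type*} [CommRing R] [Ring K] [Algebra R K] [Ring A] [Algebra R A] [Module K A]
  [IsScalarTower R K A] [IsScalarTower K A A]

theorem mul_quadratic_eq_of_mul_eq_smul_sub_one {S T : A} {s : K} (h : S * T = s • S - 1)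
    (c b : R) :
    S * (T ^ 2 - c • T + b • 1) =
      (s ^ 2 - c • s + algebraMap R K b) • S + (algebraMap R K c - s) • 1 - T := by
  rw [sq, mul_add, mul_sub, ← mul_assoc, h, mul_smul_comm, h, mul_smul_comm, mul_one, sub_mul,
    smul_mul_assoc, h, one_mul, sq, add_smul, sub_smul, mul_smul, smul_sub, smul_sub,
    algebraMap_smul, sub_smul, smul_assoc, algebraMap_smul]
  abel

end

section

variable {R A M : Type*} [CommRing R] [Ring A] [Algebra R A] [AddCommGroup M] [Module R M]
  [Module A M] [Module Aᵐᵒᵖ M] [SMulCommClass A Aᵐᵒᵖ M] [IsScalarTower R A M]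
  [IsScalarTower R Aᵐᵒᵖ M]

theorem op_quadratic_smul_eq_of_op_smul_eq {p s : A} {X D : M} (h : op p • X = s • X + D)
    (c b : R) :
    op (p ^ 2 - c • p + algebraMap R A b) • X =
      (s ^ 2 - c • s + algebraMap R A b) • X + op p • D - (algebraMap R A c - s) • D := by
  have hsq : op (p ^ 2) • X = s ^ 2 • X + s • D + op p • D := by
    rw [op_pow, sq, mul_smul, h, smul_add, ← smul_comm s (op p) X, h, sq, mul_smul, smul_add,
      add_assoc]
  rw [op_add, op_sub, add_smul, sub_smul, hsq, op_smul, smul_assoc, h,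
    ← MulOpposite.algebraMap_apply, algebraMap_smul, add_smul, sub_smul, sub_smul, smul_assoc,
    algebraMap_smul, algebraMap_smul, smul_add]
  abel

end

theorem resolvent_equation_derivation_step_general
    {V : Type*} [NormedAddCommGroup V] [NormedSpace ℝ V]
    [Module ℍ[ℝ] V] [Module ℍ[ℝ]ᵐᵒᵖ V]
    [IsScalarTower ℝ ℍ[ℝ] V] [IsScalarTower ℝ ℍ[ℝ]ᵐᵒᵖ V]
    [SMulCommClass ℍ[ℝ] ℍ[ℝ]ᵐᵒᵖ V]
    [ContinuousConstSMul ℍ[ℝ] V] [ContinuousConstSMul ℍ[ℝ]ᵐᵒᵖ V]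
    (T : V →L[ℝ] V) (hT : ∀ (a : ℍ[ℝ]) (v : V), T (op a • v) = op a • T v)
    (s p : ℍ[ℝ]) (hQs : IsUnit (T ^ 2 - (2 * s.re) • T + (‖s‖ ^ 2 : ℝ) • (1 : V →L[ℝ] V)))
    (SL SR : V →L[ℝ] V)
    (hL : op p • SL = T * SL + 1)
    (hR : SR * T = s • SR - 1) :
    op (p ^ 2 - (2 * s.re) • p + ((‖s‖ ^ 2 : ℝ) : ℍ[ℝ])) • (SR * SL) =
      (s ^ 2 - (2 * s.re) • s + ((‖s‖ ^ 2 : ℝ) : ℍ[ℝ])) • (SR * SL) +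
        op p • (SR - SL) - star s • (SR - SL) := by
  set Rp : V →L[ℝ] V := op p • 1
  have hRpT : Commute Rp T := by
    ext v
    exact (hT p v).symm
  have hRps : Commute Rp (star s • 1) := by
    rw [Commute, SemiconjBy, smul_one_mul, smul_one_mul]
    exact (smul_comm _ _ _).symm
  have hSRQs : SR * (T ^ 2 - (2 * s.re) • T + (‖s‖ ^ 2 : ℝ) • 1) = star s • 1 - T := by
    rw [mul_quadratic_eq_of_mul_eq_smul_sub_one hR, Quaternion.algebraMap_def,
      Quaternion.sq_sub_two_re_smul_add_norm_sq, zero_smul, zero_add, Quaternion.star_eq_two_re_sub]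
  have hRpSR : Commute Rp SR :=
    .of_mul_eq_of_isUnit hQs (((hRpT.pow_right 2).sub_right (hRpT.smul_right _)).add_right
      ((Commute.one_right Rp).smul_right _)) (hRps.sub_right hRpT) hSRQs
  have hE : op p • (SR * SL) = s • (SR * SL) + (SR - SL) := by
    rw [← smul_one_mul, ← mul_assoc, hRpSR.eq, mul_assoc, smul_one_mul, hL, mul_add,
      ← mul_assoc, hR, sub_mul, smul_mul_assoc, one_mul, mul_one]
    abel
  rw [Quaternion.star_eq_two_re_sub]
  exact op_quadratic_smul_eq_of_op_smul_eq hE _ _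

/-- Algebraic derivation step for the new resolvent equation: if `SL` and `SR` are
bounded operators satisfying the left and right S-resolvent equations
`SL·p = T·SL + I` and `SR·T = s·SR - I`, then
`SR SL (p² - 2Re(s)p + |s|²) = (s² - 2Re(s)s + |s|²) SR SL + [SR - SL]p - s̄[SR - SL]`. -/
theorem resolvent_equation_derivation_step
    {V : Type*} [NormedAddCommGroup V] [NormedSpace ℝ V]
    [Module ℍ[ℝ] V] [Module ℍ[ℝ]ᵐᵒᵖ V]
    [IsScalarTower ℝ ℍ[ℝ] V] [IsScalarTower ℝ ℍ[ℝ]ᵐᵒᵖ V]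
    [SMulCommClass ℝ ℍ[ℝ] V] [SMulCommClass ℝ ℍ[ℝ]ᵐᵒᵖ V]
    [SMulCommClass ℍ[ℝ] ℍ[ℝ]ᵐᵒᵖ V]
    [ContinuousConstSMul ℍ[ℝ] V] [ContinuousConstSMul ℍ[ℝ]ᵐᵒᵖ V]
    (T : V →L[ℝ] V) (hT : ∀ (a : ℍ[ℝ]) (v : V), T (op a • v) = op a • T v)
    (s p : ℍ[ℝ]) (hQs : IsUnit (T ^ 2 - (2 * s.re) • T + (‖s‖ ^ 2 : ℝ) • (1 : V →L[ℝ] V))) (hQp : IsUnit (T ^ 2 - (2 * p.re) • T + (‖p‖ ^ 2 : ℝ) • (1 : V →L[ℝ] V)))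
    (SL SR : V →L[ℝ] V)
    (hL : op p • SL = T * SL + 1)
    (hR : SR * T = s • SR - 1) :
    op (p ^ 2 - (2 * s.re) • p + ((‖s‖ ^ 2 : ℝ) : ℍ[ℝ])) • (SR * SL) =
      (s ^ 2 - (2 * s.re) • s + ((‖s‖ ^ 2 : ℝ) : ℍ[ℝ])) • (SR * SL) +
        op p • (SR - SL) - star s • (SR - SL) :=
  resolvent_equation_derivation_step_general T hT s p hQs SL SR hL hR
end

section
/- For a diagonalizable model case: if s, p are quaternions with p ∉ [s], then the quaternion K := (p - s̄)·(p² - 2Re(s)p + |s|²)⁻¹ satisfies the scalar version of the new resolvent equation with T replaced by a quaternion q ∉ [s] ∪ [p]: S_R^{-1}(s,q)S_L^{-1}(p,q) = ([S_R^{-1}(s,q) - S_L^{-1}(p,q)]p - s̄[S_R^{-1}(s,q) - S_L^{-1}(p,q)])(p² - 2Re(s)p + |s|²)⁻¹, where S_L^{-1}(p,q) = -(q² - 2Re(p)q + |p|²)⁻¹(q - p̄) and S_R^{-1}(s,q) = -(q - s̄)(q² - 2Re(s)q + |s|²)⁻¹. -/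
/-!
Write `Q_s(x) = x² - 2Re(s)x + |s|²`. The kernels satisfy the one-sided S-resolvent equations
`S_L⁻¹(p,q)p - qS_L⁻¹(p,q) = 1` and `sS_R⁻¹(s,q) - S_R⁻¹(s,q)q = 1`, because `Q_p(q)`
commutes with `q` and equals `q(q - p̄) - (q - p̄)p`. Multiplying `S_R⁻¹(s,q)S_L⁻¹(p,q)` by
`Q_s(p)` and moving `p` across `S_L⁻¹(p,q)` with the left equation turns `Q_s(p)` into
`Q_s(q)`, which `S_R⁻¹(s,q)` absorbs; the right equation then produces the claimed right-hand
side. Beyond centrality of `2Re(s)` and `|s|²` this is pure ring algebra; the quaternionic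
input is that `Q_s(q) ≠ 0` for `q ∉ [s]`.
-/

open scoped Quaternion

section Ring

variable {D : Type*} [Ring D]

/-- `x² - a x + n`; with `a = 2 Re s` and `n = |s|²` this is the paper's `Q_s(x)`. -/
def sphericalQuad (a n x : D) : D := x ^ 2 - a * x + n

variable {a n p p' q s s' : D}

theorem commute_sphericalQuad_self (ha : Commute a q) (hn : Commute n q) :
    Commute (sphericalQuad a n q) q :=
  (((Commute.refl q).pow_left 2).sub_left (ha.mul_left (Commute.refl q))).add_left hn

theorem mul_sub_sub_sub_mul_eq_sphericalQuad (ha : Commute a q) (hsum : p + p' = a)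
    (hprod : p' * p = n) : q * (q - p') - (q - p') * p = sphericalQuad a n q :=
  calc q * (q - p') - (q - p') * p = q ^ 2 - q * (p + p') + p' * p := by noncomm_ring
    _ = sphericalQuad a n q := by rw [hsum, hprod, ← ha.eq, sphericalQuad]

theorem sub_mul_sub_mul_sub_eq_sphericalQuad (hsum : s + s' = a) (hprod : s * s' = n) :
    (q - s') * q - s * (q - s') = sphericalQuad a n q :=
  calc (q - s') * q - s * (q - s') = q ^ 2 - (s + s') * q + s * s' := by noncomm_ring
    _ = sphericalQuad a n q := by rw [hsum, hprod, sphericalQuad]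

end Ring

section DivisionRing

variable {D : Type*} [DivisionRing D]

/-- The left S-resolvent `S_L⁻¹(p, q)`, with `p' = p̄`, `a = p + p̄` and `n = p̄ p`. -/
def leftResolvent (a n p' q : D) : D := -((sphericalQuad a n q)⁻¹ * (q - p'))

/-- The right S-resolvent `S_R⁻¹(s, q)`, with `s' = s̄`, `a = s + s̄` and `n = s s̄`. -/
def rightResolvent (a n s' q : D) : D := -((q - s') * (sphericalQuad a n q)⁻¹)

variable {a n a' n' p p' q s s' : D}

theorem leftResolvent_mul_sub_mul_leftResolvent (ha : Commute a q) (hn : Commute n q)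
    (hsum : p + p' = a) (hprod : p' * p = n) (hq : sphericalQuad a n q ≠ 0) :
    leftResolvent a n p' q * p - q * leftResolvent a n p' q = 1 := by
  have hcomm := (commute_sphericalQuad_self ha hn).inv_left₀
  calc leftResolvent a n p' q * p - q * leftResolvent a n p' q
      = (sphericalQuad a n q)⁻¹ * (q * (q - p') - (q - p') * p) := by
        rw [leftResolvent, mul_neg, ← mul_assoc q, ← hcomm.eq]; noncomm_ring
    _ = 1 := by rw [mul_sub_sub_sub_mul_eq_sphericalQuad ha hsum hprod, inv_mul_cancel₀ hq]

theorem mul_rightResolvent_sub_rightResolvent_mul (ha : Commute a q) (hn : Commute n q)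
    (hsum : s + s' = a) (hprod : s * s' = n) (hq : sphericalQuad a n q ≠ 0) :
    s * rightResolvent a n s' q - rightResolvent a n s' q * q = 1 := by
  have hcomm := (commute_sphericalQuad_self ha hn).inv_left₀
  calc s * rightResolvent a n s' q - rightResolvent a n s' q * q
      = ((q - s') * q - s * (q - s')) * (sphericalQuad a n q)⁻¹ := by
        rw [rightResolvent, neg_mul, mul_assoc, hcomm.eq]; noncomm_ring
    _ = 1 := by rw [sub_mul_sub_mul_sub_eq_sphericalQuad hsum hprod, mul_inv_cancel₀ hq]

theorem rightResolvent_mul_sphericalQuad (hq : sphericalQuad a n q ≠ 0) :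
    rightResolvent a n s' q * sphericalQuad a n q = -(q - s') := by
  rw [rightResolvent, neg_mul, mul_assoc, inv_mul_cancel₀ hq, mul_one]

theorem rightResolvent_mul_leftResolvent (ha : ∀ x, Commute a x) (hn : ∀ x, Commute n x)
    (ha' : Commute a' q) (hn' : Commute n' q)
    (hs : s + s' = a) (hs' : s * s' = n) (hp : p + p' = a') (hp' : p' * p = n')
    (hsq : sphericalQuad a n q ≠ 0) (hpq : sphericalQuad a' n' q ≠ 0)
    (hsp : sphericalQuad a n p ≠ 0) :
    rightResolvent a n s' q * leftResolvent a' n' p' q =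
      ((rightResolvent a n s' q - leftResolvent a' n' p' q) * p -
        s' * (rightResolvent a n s' q - leftResolvent a' n' p' q)) *
        (sphericalQuad a n p)⁻¹ := by
  set R := rightResolvent a n s' q
  set L := leftResolvent a' n' p' q
  have hL : L * p = q * L + 1 :=
    sub_eq_iff_eq_add'.mp (leftResolvent_mul_sub_mul_leftResolvent ha' hn' hp hp' hpq)
  have hR : s * R = R * q + 1 :=
    sub_eq_iff_eq_add'.mp (mul_rightResolvent_sub_rightResolvent_mul (ha q) (hn q) hs hs' hsq)
  have hRQ : R * sphericalQuad a n q = -(q - s') := rightResolvent_mul_sphericalQuad hsq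
  obtain rfl : s' = a - s := eq_sub_of_add_eq' hs
  rw [eq_mul_inv_iff_mul_eq₀ hsp]
  calc R * L * sphericalQuad a n p
      = R * (L * p) * p - R * (a * L) * p + R * (n * L) := by
        rw [sphericalQuad, (ha L).eq, (hn L).eq]; noncomm_ring
    _ = R * (q * L + 1) * p - R * (a * L) * p + R * (n * L) := by rw [hL]
    _ = R * q * (L * p) + R * p - R * a * (L * p) + R * n * L := by noncomm_ring
    _ = R * q * (q * L + 1) + R * p - R * a * (q * L + 1) + R * n * L := by rw [hL]
    _ = R * sphericalQuad a n q * L + R * q + R * p - a * R := by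
        rw [sphericalQuad, (ha R).eq]; noncomm_ring
    _ = R * p - (q * L + 1) - a * R + (R * q + 1) + (a - s) * L := by
        rw [hRQ]; noncomm_ring
    _ = (R - L) * p - (a - s) * (R - L) := by rw [← hL, ← hR]; noncomm_ring

end DivisionRing

namespace Quaternion

theorem normSq_eq_norm_sq (x : ℍ[ℝ]) : normSq x = ‖x‖ ^ 2 := by
  rw [sq, normSq_eq_norm_mul_self]

theorem sphericalQuad_ne_zero {s q : ℍ[ℝ]} (h : ¬(q.re = s.re ∧ ‖q‖ = ‖s‖)) :
    sphericalQuad ((2 * s.re : ℝ) : ℍ[ℝ]) ((‖s‖ ^ 2 : ℝ) : ℍ[ℝ]) q ≠ 0 := by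
  intro h0
  rw [← normSq_eq_norm_sq] at h0
  have hre := congrArg (·.re) h0
  have hI := congrArg (·.imI) h0
  have hJ := congrArg (·.imJ) h0
  have hK := congrArg (·.imK) h0
  simp only [sphericalQuad, normSq_def', sq, re_add, re_sub, re_mul, imI_add, imI_sub, imI_mul,
    imJ_add, imJ_sub, imJ_mul, imK_add, imK_sub, imK_mul, re_coe, imI_coe, imJ_coe, imK_coe,
    re_zero, imI_zero, imJ_zero, imK_zero] at hre hI hJ hK
  have hre_eq : q.re = s.re := by
    by_contra hne
    have hd : q.re - s.re ≠ 0 := sub_ne_zero.mpr hne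
    have hqI : q.imI = 0 :=
      (mul_eq_zero.mp (by linear_combination hI / 2 : (q.re - s.re) * q.imI = 0)).resolve_left hd
    have hqJ : q.imJ = 0 :=
      (mul_eq_zero.mp (by linear_combination hJ / 2 : (q.re - s.re) * q.imJ = 0)).resolve_left hd
    have hqK : q.imK = 0 :=
      (mul_eq_zero.mp (by linear_combination hK / 2 : (q.re - s.re) * q.imK = 0)).resolve_left hd
    rw [hqI, hqJ, hqK] at hre
    have : (q.re - s.re) ^ 2 = 0 := by
      nlinarith [sq_nonneg s.imI, sq_nonneg s.imJ, sq_nonneg s.imK]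
    exact hd (pow_eq_zero_iff two_ne_zero |>.mp this)
  refine h ⟨hre_eq, ?_⟩
  rw [← pow_left_inj₀ (norm_nonneg q) (norm_nonneg s) two_ne_zero, ← normSq_eq_norm_sq,
    ← normSq_eq_norm_sq, normSq_def', normSq_def']
  rw [hre_eq] at hre ⊢
  linear_combination -hre

end Quaternion

/-- Scalar (diagonalizable model) version of the new S-resolvent equation: for
quaternions `s`, `p`, `q` with `p ∉ [s]` and `q ∉ [s] ∪ [p]`, the scalar Cauchy
kernels `S_L⁻¹(p,q) = -(q² - 2Re(p)q + |p|²)⁻¹(q - p̄)` and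
`S_R⁻¹(s,q) = -(q - s̄)(q² - 2Re(s)q + |s|²)⁻¹` satisfy
`S_R⁻¹(s,q)S_L⁻¹(p,q) = ([S_R⁻¹(s,q) - S_L⁻¹(p,q)]p - s̄[S_R⁻¹(s,q) - S_L⁻¹(p,q)])
(p² - 2Re(s)p + |s|²)⁻¹`. -/
theorem scalar_new_resolvent_equation (s p q : ℍ[ℝ])
    (hps : ¬(p.re = s.re ∧ ‖p‖ = ‖s‖))
    (hqs : ¬(q.re = s.re ∧ ‖q‖ = ‖s‖))
    (hqp : ¬(q.re = p.re ∧ ‖q‖ = ‖p‖)) :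
    (-((q - star s) * (q ^ 2 - (2 * s.re) • q + ((‖s‖ ^ 2 : ℝ) : ℍ[ℝ]))⁻¹)) *
        (-((q ^ 2 - (2 * p.re) • q + ((‖p‖ ^ 2 : ℝ) : ℍ[ℝ]))⁻¹ * (q - star p))) =
      (((-((q - star s) * (q ^ 2 - (2 * s.re) • q + ((‖s‖ ^ 2 : ℝ) : ℍ[ℝ]))⁻¹)) -
            (-((q ^ 2 - (2 * p.re) • q + ((‖p‖ ^ 2 : ℝ) : ℍ[ℝ]))⁻¹ * (q - star p)))) * p -
          star s *
            ((-((q - star s) * (q ^ 2 - (2 * s.re) • q + ((‖s‖ ^ 2 : ℝ) : ℍ[ℝ]))⁻¹)) -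
              (-((q ^ 2 - (2 * p.re) • q + ((‖p‖ ^ 2 : ℝ) : ℍ[ℝ]))⁻¹ * (q - star p))))) *
        (p ^ 2 - (2 * s.re) • p + ((‖s‖ ^ 2 : ℝ) : ℍ[ℝ]))⁻¹ := by
  simp only [← Quaternion.coe_mul_eq_smul]
  exact rightResolvent_mul_leftResolvent (fun x ↦ Quaternion.coe_commute _ x)
    (fun x ↦ Quaternion.coe_commute _ x) (Quaternion.coe_commute _ q)
    (Quaternion.coe_commute _ q) (Quaternion.self_add_star' s)
    (by rw [Quaternion.self_mul_star, Quaternion.normSq_eq_norm_sq])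
    (Quaternion.self_add_star' p)
    (by rw [Quaternion.star_mul_self, Quaternion.normSq_eq_norm_sq])
    (Quaternion.sphericalQuad_ne_zero hqs) (Quaternion.sphericalQuad_ne_zero hqp)
    (Quaternion.sphericalQuad_ne_zero hps)
end
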